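/- If the map a ↦ φ_α(|a|) is a norm on Mₙ(ℂ) (where φ_α is the Choquet-type trace with α(1) > 0), then α is midpoint concave: α(i+1) + α(i−1) ≤ 2α(i) for all i = 1,...,n−1. -/

import Mathlib

open Matrix BigOperators Finset
open scoped ComplexOrder

/-- The `i`-th largest eigenvalue (0-indexed) of a Hermitian matrix. -/
noncomputable def eigDesc {n : ℕ} (a : Matrix (Fin n) (Fin n) ℂ) (ha : a.IsHermitian) (i : Fin n) : ℝ :=
  ha.eigenvalues (Tuple.sort ha.eigenvalues i.rev)

/-- Eigenvalues in decreasing order, extended by `0` beyond the size. `eigN a ha i = λ_{i+1}(a)`. -/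
noncomputable def eigN {n : ℕ} (a : Matrix (Fin n) (Fin n) ℂ) (ha : a.IsHermitian) (i : ℕ) : ℝ :=
  if h : i < n then eigDesc a ha ⟨i, h⟩ else 0

/-- The non-linear trace of Choquet type:
`φ_α(a) = ∑_{i=1}^{n-1} (λ_i(a) - λ_{i+1}(a)) α(i) + λ_n(a) α(n)`. -/
noncomputable def choquetTrace {n : ℕ} (α : ℕ → ℝ) (a : Matrix (Fin n) (Fin n) ℂ)
    (ha : a.IsHermitian) : ℝ :=
  ∑ i ∈ Finset.range n, (eigN a ha i - eigN a ha (i + 1)) * α (i + 1)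

/-- Functional calculus of a Hermitian matrix `a` by a function `f : ℝ → ℝ` on its eigenvalues. -/
noncomputable def funCalc {n : ℕ} (f : ℝ → ℝ) (a : Matrix (Fin n) (Fin n) ℂ)
    (ha : a.IsHermitian) : Matrix (Fin n) (Fin n) ℂ :=
  (ha.eigenvectorUnitary : Matrix (Fin n) (Fin n) ℂ) *
    Matrix.diagonal (fun i => (f (ha.eigenvalues i) : ℂ)) *
    star (ha.eigenvectorUnitary : Matrix (Fin n) (Fin n) ℂ)

/-- The absolute value `|a| = (a^* a)^{1/2}` of a matrix. -/
noncomputable def matAbs {n : ℕ} (a : Matrix (Fin n) (Fin n) ℂ) : Matrix (Fin n) (Fin n) ℂ :=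
  ((Matrix.posSemidef_conjTranspose_mul_self a).1.eigenvectorUnitary : Matrix (Fin n) (Fin n) ℂ) *
    diagonal ((↑) ∘ (√·) ∘ (Matrix.posSemidef_conjTranspose_mul_self a).1.eigenvalues) *
    (star (Matrix.posSemidef_conjTranspose_mul_self a).1.eigenvectorUnitary : Matrix (Fin n) (Fin n) ℂ)

theorem matAbs_isHermitian {n : ℕ} (a : Matrix (Fin n) (Fin n) ℂ) : (matAbs a).IsHermitian :=
  by
    unfold matAbs
    have hd : (diagonal ((↑) ∘ (√·) ∘ (Matrix.posSemidef_conjTranspose_mul_self a).1.eigenvalues) :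
        Matrix (Fin n) (Fin n) ℂ).IsHermitian :=
      isHermitian_diagonal_of_self_adjoint _ (by ext i; simp [Function.comp, Complex.conj_ofReal])
    convert isHermitian_mul_mul_conjTranspose
      ((Matrix.posSemidef_conjTranspose_mul_self a).1.eigenvectorUnitary : Matrix (Fin n) (Fin n) ℂ) hd using 2
    simp [star_eq_conjTranspose]

/-!
Choquet traces of diagonal projections are easy to compute: `φ_α(diag(1, …, 1, 0, …, 0)) = α(m)`
for `m` ones, and `φ_α` is additive on sums of nested such projections, since it only sees the
decreasing rearrangement of the diagonal. Let `P` have ones in the first `i` slots and let `Q` be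
`P` with the `i`-th and `(i+1)`-st diagonal entries swapped. Then `|P| = P`, `|Q| = Q` and
`φ_α(P) = φ_α(Q) = α(i)`, while `P + Q = diag(2, …, 2, 1, 1, 0, …, 0)` is the sum of the
projections onto the first `i - 1` and `i + 1` slots, so `φ_α(P + Q) = α(i - 1) + α(i + 1)`.
The triangle inequality for `P + Q` is therefore midpoint concavity at `i`.
-/

lemma Antitone.eq_of_map_univ_val_eq {α : Type*} [LinearOrder α] {n : ℕ} {f g : Fin n → α}
    (hf : Antitone f) (hg : Antitone g)
    (h : Multiset.map f Finset.univ.val = Multiset.map g Finset.univ.val) : f = g := by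
  refine List.ofFn_injective (List.Perm.eq_of_sortedGE hf.sortedGE_ofFn hg.sortedGE_ofFn ?_)
  rwa [← Multiset.coe_eq_coe, ← Fin.univ_val_map, ← Fin.univ_val_map]

lemma Matrix.IsHermitian.map_eigenvalues_diagonal {𝕜 ι : Type*} [RCLike 𝕜] [Fintype ι]
    [DecidableEq ι] (d : ι → ℝ) (hd : (diagonal fun j => (d j : 𝕜)).IsHermitian) :
    Multiset.map hd.eigenvalues Finset.univ.val = Multiset.map d Finset.univ.val := by
  apply Multiset.map_injective (RCLike.ofReal_injective (K := 𝕜))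
  rw [Multiset.map_map, ← hd.roots_charpoly_eq_eigenvalues, charpoly_diagonal,
    Polynomial.roots_prod _ _ (Finset.prod_ne_zero_iff.mpr fun _ _ => Polynomial.X_sub_C_ne_zero _)]
  simp [Multiset.map_map]

section eigDesc

variable {n : ℕ} {a : Matrix (Fin n) (Fin n) ℂ} (ha : a.IsHermitian)

lemma antitone_eigDesc : Antitone (eigDesc a ha) :=
  fun _ _ hij => Tuple.monotone_sort ha.eigenvalues (Fin.rev_le_rev.mpr hij)

lemma map_eigDesc :
    Multiset.map (eigDesc a ha) Finset.univ.val = Multiset.map ha.eigenvalues Finset.univ.val := by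
  rw [show eigDesc a ha = ha.eigenvalues ∘ Tuple.sort ha.eigenvalues ∘ Fin.revPerm from rfl,
    ← Multiset.map_map, ← Multiset.map_map, Multiset.map_univ_val_equiv,
    Multiset.map_univ_val_equiv]

lemma eigDesc_eq_of_map_eigenvalues_eq {e : Fin n → ℝ} (he : Antitone e)
    (h : Multiset.map ha.eigenvalues Finset.univ.val = Multiset.map e Finset.univ.val) :
    eigDesc a ha = e :=
  (antitone_eigDesc ha).eq_of_map_univ_val_eq he ((map_eigDesc ha).trans h)

lemma choquetTrace_eq_of_eigDesc_eq (α : ℕ → ℝ) {e : ℕ → ℝ}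
    (he : ∀ k : Fin n, eigDesc a ha k = e k) (hen : e n = 0) :
    choquetTrace α a ha = ∑ k ∈ Finset.range n, (e k - e (k + 1)) * α (k + 1) := by
  have heigN : ∀ k ≤ n, eigN a ha k = e k := by
    intro k hk
    rcases hk.lt_or_eq with hk | rfl
    · rw [eigN, dif_pos hk, he]
    · rw [eigN, dif_neg (lt_irrefl k), hen]
  refine Finset.sum_congr rfl fun k hk => ?_
  have hk := Finset.mem_range.mp hk
  rw [heigN k hk.le, heigN (k + 1) hk]

end eigDesc

section MatrixOrder

open scoped MatrixOrder

lemma matAbs_eq_sqrt {n : ℕ} (a : Matrix (Fin n) (Fin n) ℂ) :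
    matAbs a = CFC.sqrt (aᴴ * a) := by
  have hpsd := posSemidef_conjTranspose_mul_self a
  rw [CFC.sqrt_eq_cfc, cfc_nnreal_eq_real _ _ hpsd.nonneg, hpsd.1.cfc_eq, IsHermitian.cfc,
    Unitary.conjStarAlgAut_apply, matAbs]
  congr 4
  funext i
  simp [Real.coe_toNNReal', max_eq_left (hpsd.eigenvalues_nonneg i)]

lemma matAbs_of_posSemidef {n : ℕ} {a : Matrix (Fin n) (Fin n) ℂ} (ha : a.PosSemidef) :
    matAbs a = a := by
  rw [matAbs_eq_sqrt, ha.1.eq, CFC.sqrt_mul_self a ha.nonneg]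

end MatrixOrder

lemma choquetTrace_matAbs_diagonal {n : ℕ} (α : ℕ → ℝ) (d : Fin n → ℝ) {e : ℕ → ℝ}
    (he : Antitone e) (hen : e n = 0)
    (hd : Multiset.map d Finset.univ.val = Multiset.map (fun k : Fin n => e k) Finset.univ.val) :
    choquetTrace α (matAbs (diagonal fun j => (d j : ℂ))) (matAbs_isHermitian _) =
      ∑ k ∈ Finset.range n, (e k - e (k + 1)) * α (k + 1) := by
  have hd_nonneg : ∀ j, 0 ≤ d j := by
    intro j
    obtain ⟨k, -, hk⟩ :=
      Multiset.mem_map.mp (hd ▸ Multiset.mem_map_of_mem d (Finset.mem_univ_val j))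
    exact hk ▸ hen ▸ he k.2.le
  have hpsd : (diagonal fun j => (d j : ℂ)).PosSemidef :=
    posSemidef_diagonal_iff.mpr fun j => Complex.zero_le_real.mpr (hd_nonneg j)
  generalize matAbs_isHermitian (diagonal fun j => (d j : ℂ)) = hM
  revert hM
  rw [matAbs_of_posSemidef hpsd]
  intro hM
  refine choquetTrace_eq_of_eigDesc_eq hM α (fun k => ?_) hen
  rw [eigDesc_eq_of_map_eigenvalues_eq hM (fun i j hij => he hij)
    ((hM.map_eigenvalues_diagonal d).trans hd)]

lemma antitone_ite_lt (m : ℕ) : Antitone fun k : ℕ => if k < m then (1 : ℝ) else 0 := by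
  intro k l hkl
  dsimp only
  split_ifs <;> first | omega | norm_num

lemma sum_range_ite_lt_sub_mul (α : ℕ → ℝ) (hα0 : α 0 = 0) {m n : ℕ} (hmn : m ≤ n) :
    ∑ k ∈ Finset.range n,
      ((if k < m then (1 : ℝ) else 0) - if k + 1 < m then 1 else 0) * α (k + 1) = α m := by
  rcases m with _ | m
  · simp [hα0]
  rw [Finset.sum_eq_single m]
  · simp
  · intro k _ hkm
    rw [if_congr (show k < m + 1 ↔ k + 1 < m + 1 by omega) rfl rfl, sub_self, zero_mul]
  · simp; omega

lemma ite_lt_add_ite_lt_swap {n i : ℕ} (hi : 1 ≤ i) (hin : i < n) (j : Fin n) :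
    ((if (j : ℕ) < i then (1 : ℝ) else 0) +
      if (Equiv.swap (⟨i - 1, by omega⟩ : Fin n) ⟨i, hin⟩ j : ℕ) < i then 1 else 0) =
      (if (j : ℕ) < i - 1 then 1 else 0) + if (j : ℕ) < i + 1 then 1 else 0 := by
  rw [Equiv.swap_apply_def]
  split_ifs <;> simp_all [Fin.ext_iff] <;> omega

theorem stmt8_general (n : ℕ) (α : ℕ → ℝ) (hα0 : α 0 = 0)
    (N : Matrix (Fin n) (Fin n) ℂ → ℝ)
    (hN : ∀ a, N a = choquetTrace α (matAbs a) (matAbs_isHermitian a))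
    (htri : ∀ a b, N (a + b) ≤ N a + N b) :
    ∀ i : ℕ, 1 ≤ i → i ≤ n - 1 → α (i + 1) + α (i - 1) ≤ 2 * α i := by
  intro i hi hin
  let ind : ℕ → ℕ → ℝ := fun m k => if k < m then 1 else 0
  let σ : Equiv.Perm (Fin n) := Equiv.swap ⟨i - 1, by omega⟩ ⟨i, by omega⟩
  let P := diagonal fun j : Fin n => (ind i j : ℂ)
  let Q := diagonal fun j : Fin n => (ind i (σ j) : ℂ)
  have hP : N P = α i := by
    rw [hN, choquetTrace_matAbs_diagonal α _ (antitone_ite_lt i) (if_neg (by omega)) rfl,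
      sum_range_ite_lt_sub_mul α hα0 (by omega)]
  have hQ : N Q = α i := by
    rw [hN, choquetTrace_matAbs_diagonal α _ (antitone_ite_lt i) (if_neg (by omega))
      (by rw [show (fun j : Fin n => ind i (σ j)) = (fun k : Fin n => ind i k) ∘ σ from rfl,
        ← Multiset.map_map, Multiset.map_univ_val_equiv]),
      sum_range_ite_lt_sub_mul α hα0 (by omega)]
  have hPQ : P + Q = diagonal fun j : Fin n => ((ind (i - 1) j + ind (i + 1) j : ℝ) : ℂ) := by
    rw [diagonal_add]
    congr 1
    funext j
    rw [← Complex.ofReal_add, ← ite_lt_add_ite_lt_swap hi (by omega) j]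
  have hPQ_val : N (P + Q) = α (i - 1) + α (i + 1) := by
    rw [hPQ, hN, choquetTrace_matAbs_diagonal α _ ((antitone_ite_lt _).add (antitone_ite_lt _))
      (by rw [if_neg (by omega), if_neg (by omega), add_zero]) rfl]
    simp only [add_sub_add_comm, add_mul, Finset.sum_add_distrib]
    rw [sum_range_ite_lt_sub_mul α hα0 (by omega), sum_range_ite_lt_sub_mul α hα0 (by omega)]
  linarith [htri P Q]

/-- if `a ↦ φ_α(|a|)` is a norm (with `α(1) > 0`), then `α` is midpoint concave. -/
theorem stmt8 (n : ℕ) (α : ℕ → ℝ) (hα0 : α 0 = 0)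
    (hmono : ∀ i j : ℕ, i ≤ j → j ≤ n → α i ≤ α j) (hα1 : 0 < α 1)
    (N : Matrix (Fin n) (Fin n) ℂ → ℝ)
    (hN : ∀ a, N a = choquetTrace α (matAbs a) (matAbs_isHermitian a))
    (hzero : ∀ a, N a = 0 ↔ a = 0)
    (htri : ∀ a b, N (a + b) ≤ N a + N b)
    (hsmul : ∀ (k : ℂ) (a), N (k • a) = ‖k‖ * N a) :
    ∀ i : ℕ, 1 ≤ i → i ≤ n - 1 → α (i + 1) + α (i - 1) ≤ 2 * α i :=
  stmt8_general n α hα0 N hN htri
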